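/- arXiv:2312.10061 — 2 statements merged into one kernel-verified Lean document; each statement's English description precedes it below -/
import Mathlib

section
/- Let α ≥ 5. Suppose s is a left-infinite α-power-free word, w, η̄, η₀ are finite words with w nonempty, the letter x is not a factor of η₀, the left-infinite word s·w·η̄·η₀ is α-power-free, |η₀| > |w·η̄|, and w occurs exactly once in s·w (i.e., occur(s·w, w) = 1 counting the suffix occurrence). Then s·w·η̄·η₀·x is α-power-free. -/
open List

/-- The concrete β-power word: `n` full copies of `r` followed by a prefix `t` of `r`. -/
def powWord {A : Type*} (r : List A) (n : ℕ) (t : List A) : List A :=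
  (List.replicate n r).flatten ++ t

/-- `p` is a `β`-power `r^β` for some nonempty `r` and rational `β ≥ α`
    (here `β = |p| / |r|`). -/
def IsPowerGE {A : Type*} (α : ℚ) (p : List A) : Prop :=
  ∃ (r t : List A) (n : ℕ), r ≠ [] ∧ t <+: r ∧ p = powWord r n t ∧
    α * (r.length : ℚ) ≤ (p.length : ℚ)

/-- A finite word is `α`-power-free if no factor of it is a `β`-power with `β ≥ α`. -/
def PowerFree {A : Type*} (α : ℚ) (w : List A) : Prop :=
  ∀ p : List A, p <:+: w → ¬ IsPowerGE α p

/-- The factor of the right-infinite word `t` of length `n` starting at position `i`. -/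
def windowR {A : Type*} (t : ℕ → A) (i n : ℕ) : List A :=
  (List.range n).map fun j => t (i + j)

/-- `u` is a finite factor of the right-infinite word `t`. -/
def FactorR {A : Type*} (u : List A) (t : ℕ → A) : Prop :=
  ∃ i, u = windowR t i u.length

/-- `u` is a finite factor of the left-infinite word `s`
    (`s 0` is the last letter, `s 1` the one before it, etc.). -/
def FactorL {A : Type*} (u : List A) (s : ℕ → A) : Prop :=
  ∃ i, u = ((List.range u.length).map fun j => s (i + j)).reverse

/-- The factor of the bi-infinite word `v` of length `n` starting at position `i`. -/
def windowZ {A : Type*} (v : ℤ → A) (i : ℤ) (n : ℕ) : List A :=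
  (List.range n).map fun j => v (i + j)

/-- `p` occurs in the bi-infinite word `v` at position `i`. -/
def occursAtZ {A : Type*} (v : ℤ → A) (p : List A) (i : ℤ) : Prop :=
  p = windowZ v i p.length

/-- `u` is a finite factor of the bi-infinite word `v`. -/
def FactorZ {A : Type*} (u : List A) (v : ℤ → A) : Prop :=
  ∃ i : ℤ, u = windowZ v i u.length

/-- A right-infinite word is `α`-power-free if no finite factor is a `β`-power, `β ≥ α`. -/
def PowerFreeR {A : Type*} (α : ℚ) (t : ℕ → A) : Prop :=
  ∀ u : List A, FactorR u t → ¬ IsPowerGE α u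

/-- A left-infinite word is `α`-power-free if no finite factor is a `β`-power, `β ≥ α`. -/
def PowerFreeL {A : Type*} (α : ℚ) (s : ℕ → A) : Prop :=
  ∀ u : List A, FactorL u s → ¬ IsPowerGE α u

/-- A bi-infinite word is `α`-power-free if no finite factor is a `β`-power, `β ≥ α`. -/
def PowerFreeZ {A : Type*} (α : ℚ) (v : ℤ → A) : Prop :=
  ∀ u : List A, FactorZ u v → ¬ IsPowerGE α u

/-- `u` is a recurrent factor of the right-infinite word `t`: it occurs at
    arbitrarily large positions. -/
def RecurrentR {A : Type*} (u : List A) (t : ℕ → A) : Prop :=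
  ∀ N : ℕ, ∃ i, N ≤ i ∧ u = windowR t i u.length

/-- The bi-infinite word `s·w·t`: the left-infinite word `s` on negative positions,
    the finite word `w` on `[0, |w|)`, and the right-infinite word `t` afterwards. -/
def glue {A : Type*} (s : ℕ → A) (w : List A) (t : ℕ → A) : ℤ → A := fun i =>
  if i < 0 then s ((-i - 1).toNat)
  else if h : i.toNat < w.length then w[i.toNat] else t (i.toNat - w.length)

/-- The left-infinite word `s·u`. -/
def appendL {A : Type*} (s : ℕ → A) (u : List A) : ℕ → A := fun n =>
  if h : n < u.length then u[u.length - 1 - n]'(by omega) else s (n - u.length)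

/-- `w` occurs in the left-infinite word `s` at distance `i` from the right end:
    `w` occupies the positions `i + |w| - 1, …, i + 1, i`. -/
def occursAtL {A : Type*} (s : ℕ → A) (w : List A) (i : ℕ) : Prop :=
  w = ((List.range w.length).map fun j => s (i + j)).reverse

/-- The number of occurrences of `p` as a factor of the finite word `w`. -/
def occur {A : Type*} [DecidableEq A] (w p : List A) : ℕ :=
  ((List.range (w.length + 1)).filter fun i => decide (p <+: w.drop i)).length

/-! A power ending at the fresh letter `x` has a period `R` with `5R` at most its length, so
`x` also occurs `R` letters before the end; as `x ∉ η₀`, this forces `R > |η₀| > |w·η̄|`. The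
power is then long enough to contain the occurrence of `w` just before `η̄·η₀·x` together with
its shift by `R`, a second occurrence of `w` in `s·w`. A power not ending at `x` is a factor of
`s·w·η̄·η₀`. -/

section PowWord

variable {A : Type*} {r t : List A}

lemma powWord_length (r : List A) (n : ℕ) (t : List A) :
    (powWord r n t).length = n * r.length + t.length := by
  simp [powWord, length_flatten, map_replicate, sum_replicate]

lemma powWord_succ (r : List A) (n : ℕ) (t : List A) :
    powWord r (n + 1) t = r ++ powWord r n t := by
  simp [powWord, replicate_succ]

lemma powWord_prefix_succ (ht : t <+: r) (n : ℕ) : powWord r n t <+: powWord r (n + 1) t := by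
  simp only [powWord, replicate_succ', flatten_append, flatten_singleton, append_assoc,
    prefix_append_right_inj]
  exact ht.trans (prefix_append r t)

lemma powWord_getElem_add_length (ht : t <+: r) (n k : ℕ)
    (hk : k + r.length < (powWord r n t).length) :
    (powWord r n t)[k + r.length] = (powWord r n t)[k] := by
  cases n with
  | zero =>
    have := ht.length_le
    simp only [powWord_length] at hk
    omega
  | succ n =>
    have hk' : k < (powWord r n t).length := by
      simp only [powWord_length] at hk ⊢
      nlinarith
    rw [getElem_of_eq (powWord_succ r n t), getElem_append_right (by omega)]
    simp only [Nat.add_sub_cancel]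
    exact (powWord_prefix_succ ht n).getElem hk'

lemma IsPowerGE.exists_period {α : ℚ} {u : List A} (hu : IsPowerGE α u) :
    ∃ R : ℕ, 0 < R ∧ α * R ≤ u.length ∧
      ∀ k (hk : k + R < u.length), u[k + R] = u[k] := by
  obtain ⟨r, t, n, hr, ht, rfl, hlen⟩ := hu
  exact ⟨r.length, length_pos_iff.2 hr, hlen, powWord_getElem_add_length ht n⟩

end PowWord

section LeftInfinite

variable {A : Type*}

lemma appendL_append (s : ℕ → A) (v u : List A) (m : ℕ) :
    appendL s (v ++ u) (u.length + m) = appendL s v m := by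
  unfold appendL
  by_cases h : m < v.length
  · rw [dif_pos (by simp only [length_append]; omega), dif_pos h]
    have hidx : (v ++ u).length - 1 - (u.length + m) = v.length - 1 - m := by
      simp only [length_append]
      omega
    simp only [hidx]
    exact getElem_append_left (by omega)
  · rw [dif_neg (by simp only [length_append]; omega), dif_neg h]
    congr 1
    simp only [length_append]
    omega

lemma appendL_append_mem (s : ℕ → A) (v u : List A) {m : ℕ} (hm : m < u.length) :
    appendL s (v ++ u) m ∈ u := by
  simp only [appendL, length_append, show m < v.length + u.length by omega, dite_true]
  rw [getElem_append_right (by omega)]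
  exact getElem_mem _

lemma appendL_concat_zero (s : ℕ → A) (v : List A) (x : A) : appendL s (v ++ [x]) 0 = x := by
  simp [appendL]

lemma length_lt_of_appendL_concat_eq {s : ℕ → A} {v η : List A} {x : A} (hx : x ∉ η)
    {R : ℕ} (hR : 0 < R) (h : appendL s (v ++ η ++ [x]) R = x) : η.length < R := by
  by_contra! hle
  obtain ⟨m, rfl⟩ : ∃ m, R = [x].length + m :=
    ⟨R - 1, by simp only [length_singleton]; omega⟩
  rw [appendL_append] at h
  exact hx (h ▸ appendL_append_mem s v η (by simp only [length_singleton] at hle; omega))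

lemma occursAtL_iff_getElem {f : ℕ → A} {p : List A} {i : ℕ} :
    occursAtL f p i ↔ ∀ j (hj : j < p.length), f (i + j) = p[p.length - 1 - j] := by
  rw [occursAtL, ext_getElem_iff]
  simp only [length_reverse, length_map, length_range, getElem_reverse, getElem_map,
    getElem_range, true_and]
  constructor
  · intro h j hj
    have hj' := h (p.length - 1 - j) (by omega) (by omega)
    simp only [show p.length - 1 - (p.length - 1 - j) = j by omega] at hj'
    exact hj'.symm
  · intro h k hk _
    rw [h _ (by omega)]
    simp only [show p.length - 1 - (p.length - 1 - k) = k by omega]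

lemma occursAtL.apply_add_period {f : ℕ → A} {p : List A} {i R : ℕ} (h : occursAtL f p i)
    (hper : ∀ k (hk : k + R < p.length), p[k + R] = p[k]) {m : ℕ} (hm : m + R < p.length) :
    f (i + m + R) = f (i + m) := by
  rw [occursAtL_iff_getElem] at h
  rw [add_assoc, h (m + R) hm, h m (by omega), ← hper (p.length - 1 - (m + R)) (by omega)]
  congr 1
  omega

lemma occursAtL.add_period {f : ℕ → A} {p : List A} {a R : ℕ} (h : occursAtL f p a)
    (hper : ∀ j < p.length, f (a + j + R) = f (a + j)) : occursAtL f p (a + R) := by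
  rw [occursAtL_iff_getElem] at h ⊢
  intro j hj
  rw [add_right_comm, hper j hj, h j hj]

lemma occursAtL_appendL_append_iff (s : ℕ → A) (v u p : List A) (m : ℕ) :
    occursAtL (appendL s (v ++ u)) p (u.length + m) ↔ occursAtL (appendL s v) p m := by
  simp only [occursAtL_iff_getElem, add_assoc, appendL_append]

lemma occursAtL_appendL_self (s : ℕ → A) (w : List A) : occursAtL (appendL s w) w 0 := by
  rw [occursAtL_iff_getElem]
  intro j hj
  simp [appendL, hj]

end LeftInfinite

theorem append_fresh_letter_general {A : Type*} (α : ℚ) (hα : 5 ≤ α)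
    (s : ℕ → A) (w ηb η₀ : List A) (x : A)
    (hx : x ∉ η₀)
    (hpf : PowerFreeL α (appendL s (w ++ ηb ++ η₀)))
    (hlen : (w ++ ηb).length < η₀.length)
    (hocc : ∃! i : ℕ, occursAtL (appendL s w) w i) :
    PowerFreeL α (appendL s (w ++ ηb ++ η₀ ++ [x])) := by
  set V := appendL s (w ++ ηb ++ η₀ ++ [x]) with hVdef
  rintro u ⟨i, hui⟩ hpow
  change occursAtL V u i at hui
  cases i with
  | succ m =>
    rw [add_comm, ← length_singleton (a := x), occursAtL_appendL_append_iff] at hui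
    exact hpf u ⟨m, hui⟩ hpow
  | zero =>
    obtain ⟨R, hR, hαR, hper⟩ := hpow.exists_period
    have hVper : ∀ m, m + R < u.length → V (m + R) = V m := fun m hm => by
      simpa using hui.apply_add_period hper hm
    have h5R : 5 * R ≤ u.length := by
      exact_mod_cast (mul_le_mul_of_nonneg_right hα (Nat.cast_nonneg R)).trans hαR
    have hVR : V (0 + R) = x := (hVper 0 (by omega)).trans (appendL_concat_zero s _ x)
    have hη₀R : η₀.length < R := length_lt_of_appendL_concat_eq hx hR (zero_add R ▸ hVR)
    have hV : V = appendL s (w ++ (ηb ++ η₀ ++ [x])) := by simp only [hVdef, append_assoc]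
    have hwE : occursAtL V w (ηb ++ η₀ ++ [x]).length := by
      rw [hV, ← add_zero (length _), occursAtL_appendL_append_iff]
      exact occursAtL_appendL_self s w
    have hwER := hwE.add_period fun j hj => hVper _ <| by
      simp only [length_append, length_singleton] at hlen ⊢
      omega
    rw [hV, occursAtL_appendL_append_iff] at hwER
    exact hR.ne' (hocc.unique hwER (occursAtL_appendL_self s w))

/-- Key step in Lemma 4 of the paper: appending a letter `x` not occurring in `η₀`
    to the α-power-free left-infinite word `s·w·η̄·η₀` keeps it α-power-free, provided
    `|η₀| > |w·η̄|` and `w` occurs exactly once in `s·w`. -/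
theorem append_fresh_letter {A : Type*} (α : ℚ) (hα : 5 ≤ α)
    (s : ℕ → A) (w ηb η₀ : List A) (x : A) (hw : w ≠ [])
    (hs : PowerFreeL α s) (hx : x ∉ η₀)
    (hpf : PowerFreeL α (appendL s (w ++ ηb ++ η₀)))
    (hlen : (w ++ ηb).length < η₀.length)
    (hocc : ∃! i : ℕ, occursAtL (appendL s w) w i) :
    PowerFreeL α (appendL s (w ++ ηb ++ η₀ ++ [x])) :=
  append_fresh_letter_general α hα s w ηb η₀ x hx hpf hlen hocc
end

section
/- If v is a bi-infinite α-power-free word and a nonempty finite word w occurs infinitely often in v, then there exist a left-infinite α-power-free word v̄, a finite word η with |η| ≥ (α+1)·α^{|w|}·|w|, a letter x occurring in w, and a right-infinite α-power-free word v̂ such that v = v̄·w·η·x·v̂. -/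
open List

/-!
Take two occurrences of `w` in `v` at positions `i < j` with
`j - i ≥ |w| + ⌈(α+1)·α^|w|·|w|⌉`, which exist because there are infinitely many.
Cutting `v` just before position `i` and just after position `j` gives
`v = v̄·w·η·x·v̂` with `η` the gap between the two occurrences and `x = v j` the
first letter of `w`; `v̄` and `v̂` inherit power-freeness because their factors are
factors of `v`.
-/

section Windows

variable {A : Type*}

-- `windowZ` maps over `List.range n` coerced to `List ℤ` through the list monad.
theorem windowZ_eq_map_range (v : ℤ → A) (i : ℤ) (n : ℕ) :
    windowZ v i n = (List.range n).map fun j : ℕ => v (i + j) := by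
  simp [windowZ, ← List.map_eq_flatMap]

@[simp]
theorem length_windowZ (v : ℤ → A) (i : ℤ) (n : ℕ) : (windowZ v i n).length = n := by
  simp [windowZ_eq_map_range]

@[simp]
theorem getElem_windowZ (v : ℤ → A) (i : ℤ) (n k : ℕ) (h : k < (windowZ v i n).length) :
    (windowZ v i n)[k] = v (i + k) := by
  simp [windowZ_eq_map_range]

theorem windowZ_add (v : ℤ → A) (i : ℤ) (a b : ℕ) :
    windowZ v i (a + b) = windowZ v i a ++ windowZ v (i + a) b := by
  simp only [windowZ_eq_map_range, List.range_add, List.map_append, List.map_map]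
  congr 1
  refine List.map_congr_left fun k _ => ?_
  simp only [Function.comp_apply, Nat.cast_add, add_assoc]

theorem windowZ_one (v : ℤ → A) (i : ℤ) : windowZ v i 1 = [v i] := by
  simp [windowZ_eq_map_range]

theorem windowR_shift_eq_windowZ (v : ℤ → A) (c : ℤ) (i n : ℕ) :
    windowR (fun k : ℕ => v (c + k)) i n = windowZ v (c + i) n := by
  simp [windowR, windowZ_eq_map_range, add_assoc]

theorem reverse_map_range_eq_windowZ (v : ℤ → A) (c : ℤ) (i n : ℕ) :
    ((List.range n).map fun j => v (c - 1 - ↑(i + j))).reverse = windowZ v (c - i - n) n := by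
  refine List.ext_getElem (by simp) fun k h _ => ?_
  simp only [List.length_reverse, List.length_map, List.length_range] at h
  simp only [List.getElem_reverse, List.getElem_map, List.getElem_range, getElem_windowZ]
  congr 1
  simp only [List.length_map, List.length_range]
  omega

theorem mem_of_occursAtZ {v : ℤ → A} {w : List A} {i : ℤ} (h : occursAtZ v w i) (hw : w ≠ []) :
    v i ∈ w := by
  rw [h, windowZ_eq_map_range]
  exact List.mem_map.mpr ⟨0, List.mem_range.mpr (List.length_pos_iff.mpr hw), by simp⟩

theorem glue_windowZ (v : ℤ → A) (c : ℤ) (n : ℕ) :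
    glue (fun k : ℕ => v (c - 1 - k)) (windowZ v c n) (fun k : ℕ => v (c + n + k)) =
      fun i => v (i + c) := by
  funext i
  unfold glue
  split_ifs with hneg hlt
  · dsimp only
    congr 1; omega
  · rw [getElem_windowZ]; congr 1; omega
  · simp only [length_windowZ] at hlt ⊢
    congr 1; omega

end Windows

section PowerFree

variable {A : Type*} {v : ℤ → A}

theorem FactorR.factorZ_of_shift {u : List A} {c : ℤ} (h : FactorR u fun k : ℕ => v (c + k)) :
    FactorZ u v := by
  obtain ⟨i, hi⟩ := h
  exact ⟨c + i, hi.trans (windowR_shift_eq_windowZ v c i _)⟩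

theorem FactorL.factorZ_of_shift {u : List A} {c : ℤ}
    (h : FactorL u fun k : ℕ => v (c - 1 - k)) : FactorZ u v := by
  obtain ⟨i, hi⟩ := h
  exact ⟨c - i - u.length, hi.trans (reverse_map_range_eq_windowZ v c i _)⟩

theorem PowerFreeZ.powerFreeR_shift {α : ℚ} (hv : PowerFreeZ α v) (c : ℤ) :
    PowerFreeR α fun k : ℕ => v (c + k) :=
  fun u hu => hv u hu.factorZ_of_shift

theorem PowerFreeZ.powerFreeL_shift {α : ℚ} (hv : PowerFreeZ α v) (c : ℤ) :
    PowerFreeL α fun k : ℕ => v (c - 1 - k) :=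
  fun u hu => hv u hu.factorZ_of_shift

end PowerFree

theorem Set.Infinite.exists_add_le {S : Set ℤ} (hS : S.Infinite) (d : ℤ) :
    ∃ i ∈ S, ∃ j ∈ S, i + d ≤ j := by
  obtain ⟨a, ha⟩ := hS.nonempty
  obtain ⟨b, hb, hb'⟩ := (hS.sdiff (Set.finite_Icc (a - d) (a + d))).nonempty
  by_cases hba : b + d ≤ a
  · exact ⟨b, hb, a, ha, hba⟩
  · exact ⟨a, ha, b, hb, by by_contra; exact hb' ⟨by omega, by omega⟩⟩

theorem decompose_recurrent_general {A : Type*} (α : ℚ)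
    (v : ℤ → A) (hv : PowerFreeZ α v) (w : List A) (hw : w ≠ [])
    (hinf : {i : ℤ | occursAtZ v w i}.Infinite) :
    ∃ (vb : ℕ → A) (η : List A) (x : A) (vh : ℕ → A),
      ((α + 1) * α ^ w.length * (w.length : ℚ) ≤ (η.length : ℚ)) ∧ x ∈ w ∧
      PowerFreeL α vb ∧ PowerFreeR α vh ∧
      ∃ c : ℤ, (fun i => v (i + c)) = glue vb (w ++ η ++ [x]) vh := by
  set n := w.length
  set L := ⌈(α + 1) * α ^ n * n⌉₊
  obtain ⟨i, hi, j, hj, hij⟩ := hinf.exists_add_le (n + L)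
  obtain ⟨m, rfl⟩ : ∃ m : ℕ, j = i + n + m := ⟨(j - i - n).toNat, by omega⟩
  refine ⟨fun k => v (i - 1 - k), windowZ v (i + n) m, v (i + n + m),
    fun k => v (i + ↑(n + m + 1) + k), ?_, mem_of_occursAtZ hj hw, hv.powerFreeL_shift i,
    hv.powerFreeR_shift _, i, ?_⟩
  · rw [length_windowZ]
    exact (Nat.le_ceil _).trans (by exact_mod_cast (by omega : L ≤ m))
  · rw [← glue_windowZ v i (n + m + 1), windowZ_add, windowZ_add, windowZ_one, ← hi]
    simp only [Nat.cast_add, add_assoc]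

/-- If a nonempty word `w` occurs infinitely often in a bi-infinite α-power-free word
    `v`, then `v` can be written (up to shift) as `v̄·w·η·x·v̂` with `v̄` left-infinite
    α-power-free, `v̂` right-infinite α-power-free, `x` a letter of `w`, and
    `|η| ≥ (α+1)·α^{|w|}·|w|`. -/
theorem decompose_recurrent {A : Type*} [Fintype A] (α : ℚ) (hα : 0 < α)
    (v : ℤ → A) (hv : PowerFreeZ α v) (w : List A) (hw : w ≠ [])
    (hinf : {i : ℤ | occursAtZ v w i}.Infinite) :
    ∃ (vb : ℕ → A) (η : List A) (x : A) (vh : ℕ → A),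
      ((α + 1) * α ^ w.length * (w.length : ℚ) ≤ (η.length : ℚ)) ∧ x ∈ w ∧
      PowerFreeL α vb ∧ PowerFreeR α vh ∧
      ∃ c : ℤ, (fun i => v (i + c)) = glue vb (w ++ η ++ [x]) vh :=
  decompose_recurrent_general α v hv w hw hinf
end
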